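/- If D_k ∘ D_{k-1} = 0 for linear maps between finite-dimensional real inner product spaces, then for any λ ≠ 0 the eigenspace of the Laplacian L_k = D_k^* D_k + D_{k-1} D_{k-1}^* for eigenvalue λ is the direct sum of the λ-eigenspace of D_k^* D_k intersected with ker D_{k-1}^* and the λ-eigenspace of D_{k-1} D_{k-1}^* intersected with ker D_k; in particular every nonzero eigenvalue of L_k is a nonzero eigenvalue of D_k^* D_k or of D_{k-1} D_{k-1}^*. -/
import Mathlib


theorem stmt6 {V₀ V₁ V₂ : Type*}
    [NormedAddCommGroup V₀] [InnerProductSpace ℝ V₀] [FiniteDimensional ℝ V₀]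
    [NormedAddCommGroup V₁] [InnerProductSpace ℝ V₁] [FiniteDimensional ℝ V₁]
    [NormedAddCommGroup V₂] [InnerProductSpace ℝ V₂] [FiniteDimensional ℝ V₂]
    (D' : V₀ →ₗ[ℝ] V₁) (D : V₁ →ₗ[ℝ] V₂)
    (hDD : D ∘ₗ D' = 0) (c : ℝ) (hc : c ≠ 0) :
    (LinearMap.ker
        ((LinearMap.adjoint D ∘ₗ D + D' ∘ₗ LinearMap.adjoint D') - c • LinearMap.id) =
      (LinearMap.ker (LinearMap.adjoint D ∘ₗ D - c • LinearMap.id) ⊓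
          LinearMap.ker (LinearMap.adjoint D')) ⊔
        (LinearMap.ker (D' ∘ₗ LinearMap.adjoint D' - c • LinearMap.id) ⊓
          LinearMap.ker D)) ∧
    Disjoint
      (LinearMap.ker (LinearMap.adjoint D ∘ₗ D - c • LinearMap.id) ⊓
        LinearMap.ker (LinearMap.adjoint D'))
      (LinearMap.ker (D' ∘ₗ LinearMap.adjoint D' - c • LinearMap.id) ⊓
        LinearMap.ker D) ∧
    ((∃ x : V₁, x ≠ 0 ∧
        (LinearMap.adjoint D ∘ₗ D + D' ∘ₗ LinearMap.adjoint D') x = c • x) →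
      (∃ x : V₁, x ≠ 0 ∧ (LinearMap.adjoint D ∘ₗ D) x = c • x) ∨
      (∃ x : V₁, x ≠ 0 ∧ (D' ∘ₗ LinearMap.adjoint D') x = c • x)) := by
  set A := LinearMap.adjoint D ∘ₗ D with hAdef
  set B := D' ∘ₗ LinearMap.adjoint D' with hBdef
  have h1 : ∀ x, D (D' x) = 0 := fun x => LinearMap.ext_iff.mp hDD x
  have h2c : LinearMap.adjoint D' ∘ₗ LinearMap.adjoint D = 0 := by
    rw [← LinearMap.adjoint_comp, hDD, map_zero]
  have h2 : ∀ x : V₂, LinearMap.adjoint D' (LinearMap.adjoint D x) = 0 :=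
    fun x => LinearMap.ext_iff.mp h2c x
  have hAB : ∀ x, A (B x) = 0 := by
    intro x
    simp only [hAdef, hBdef, LinearMap.comp_apply, h1, map_zero]
  have hBA : ∀ x, B (A x) = 0 := by
    intro x
    simp only [hAdef, hBdef, LinearMap.comp_apply, h2, map_zero]
  -- membership characterizations
  have memL : ∀ x, x ∈ LinearMap.ker ((A + B) - c • LinearMap.id) ↔ A x + B x = c • x := by
    intro x
    simp [LinearMap.mem_ker, LinearMap.sub_apply, LinearMap.add_apply, sub_eq_zero]
  have memA : ∀ x, x ∈ LinearMap.ker (A - c • LinearMap.id) ↔ A x = c • x := by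
    intro x
    simp [LinearMap.mem_ker, LinearMap.sub_apply, sub_eq_zero]
  have memB : ∀ x, x ∈ LinearMap.ker (B - c • LinearMap.id) ↔ B x = c • x := by
    intro x
    simp [LinearMap.mem_ker, LinearMap.sub_apply, sub_eq_zero]
  -- eigen equations for components
  have key : ∀ x, A x + B x = c • x → A (A x) = c • A x ∧ B (B x) = c • B x := by
    intro x h
    constructor
    · have := congrArg A h
      rw [map_add, hAB, add_zero, map_smul] at this
      exact this
    · have := congrArg B h
      rw [map_add, hBA, zero_add, map_smul] at this
      exact this
  refine ⟨?_, ?_, ?_⟩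
  · ext x
    rw [memL]
    constructor
    · intro h
      have hx : x = c⁻¹ • A x + c⁻¹ • B x := by
        rw [← smul_add, h, smul_smul, inv_mul_cancel₀ hc, one_smul]
      have hkey := key x h
      rw [hx]
      apply Submodule.add_mem_sup
      · refine ⟨(memA _).mpr ?_, ?_⟩
        · rw [map_smul, hkey.1, smul_comm]
        · show LinearMap.adjoint D' (c⁻¹ • A x) = 0
          rw [map_smul]
          simp [hAdef, LinearMap.comp_apply, h2]
      · refine ⟨(memB _).mpr ?_, ?_⟩
        · rw [map_smul, hkey.2, smul_comm]
        · show D (c⁻¹ • B x) = 0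
          rw [map_smul]
          simp [hBdef, LinearMap.comp_apply, h1]
    · intro h
      rcases Submodule.mem_sup.mp h with ⟨y, hy, z, hz, rfl⟩
      obtain ⟨hy1, hy2⟩ := hy
      obtain ⟨hz1, hz2⟩ := hz
      replace hy1 : A y = c • y := (memA y).mp hy1
      replace hz1 : B z = c • z := (memB z).mp hz1
      have hy2' : LinearMap.adjoint D' y = 0 := hy2
      have hz2' : D z = 0 := hz2
      have hBy : B y = 0 := by simp [hBdef, LinearMap.comp_apply, hy2']
      have hAz : A z = 0 := by simp [hAdef, LinearMap.comp_apply, hz2']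
      rw [map_add, map_add, hBy, hAz, hy1, hz1, smul_add]
      abel
  · rw [Submodule.disjoint_def]
    intro x hx1 hx2
    obtain ⟨ha, _⟩ := hx1
    obtain ⟨_, hd⟩ := hx2
    replace ha : A x = c • x := (memA x).mp ha
    have hd' : D x = 0 := hd
    have : A x = 0 := by simp [hAdef, LinearMap.comp_apply, hd']
    rw [this] at ha
    rcases smul_eq_zero.mp ha.symm with h | h
    · exact absurd h hc
    · exact h
  · rintro ⟨x, hx0, hx⟩
    have hx' : A x + B x = c • x := hx
    have hkey := key x hx'
    by_cases hA0 : A x = 0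
    · right
      refine ⟨x, hx0, ?_⟩
      rw [hA0, zero_add] at hx'
      exact hx'
    · left
      exact ⟨A x, hA0, hkey.1⟩
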